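/- arXiv:1609.01773 — 4 statements merged into one kernel-verified Lean document; each statement's English description precedes it below -/
import Mathlib

section
/- Let g be a finite-dimensional complex semisimple Lie algebra realized inside M_n(ℂ) so that it is closed under conjugate transpose x ↦ x*. Equip g with the inner product ⟨x,y⟩ = B(x, y*), where B is the Killing form. Then for any Lie algebra automorphism g of 𝔤, its adjoint with respect to this inner product is σ ∘ g⁻¹ ∘ σ where σ(x) = x*, and this adjoint is again a Lie algebra automorphism of 𝔤. In particular Aut(𝔤) is closed under taking adjoints. -/
/-!
The conjugate transpose `σ` is conjugate-linear and reverses brackets,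
`σ ⁅x, y⁆ = ⁅σ y, σ x⁆`, so in `σ ∘ φ⁻¹ ∘ σ` both the antilinearity and the order reversal
cancel: it is a ℂ-linear Lie automorphism. It is the adjoint of `φ` because the Killing form is
invariant under automorphisms, `B (φ x, z) = B (x, φ⁻¹ z)`.
-/

attribute [local instance 100] LieRing.ofAssociativeRing

/-- The conjugate-transpose map on a Lie subalgebra of matrices closed under
conjugate transpose. -/
def sigmaStar {n : ℕ} (L : LieSubalgebra ℂ (Matrix (Fin n) (Fin n) ℂ))
    (hσ : ∀ x ∈ L, star x ∈ L) : L → L :=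
  fun y => ⟨star (y : Matrix (Fin n) (Fin n) ℂ), hσ _ y.2⟩

section SemilinearAntiautomorphism

variable {R L : Type*} [CommRing R] [StarRing R] [LieRing L] [LieAlgebra R L]

def LieEquiv.conjSemilinearAnti (σ : L ≃ₛₗ[starRingEnd R] L)
    (hσ : ∀ x y, σ ⁅x, y⁆ = ⁅σ y, σ x⁆) (f : L ≃ₗ⁅R⁆ L) : L ≃ₗ⁅R⁆ L where
  toFun y := σ (f (σ.symm y))
  invFun y := σ (f.symm (σ.symm y))
  map_add' x y := by simp
  map_smul' c y := by
    rw [σ.symm.map_smulₛₗ, map_smul f, σ.map_smulₛₗ]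
    simp
  map_lie' {x y} := by
    have hσ_symm : ∀ x y, σ.symm ⁅x, y⁆ = ⁅σ.symm y, σ.symm x⁆ := fun x y => by
      rw [σ.symm_apply_eq, hσ, σ.apply_symm_apply, σ.apply_symm_apply]
    rw [hσ_symm, f.map_lie, hσ]
  left_inv y := by simp
  right_inv y := by simp

end SemilinearAntiautomorphism

section StarClosed

variable {R A : Type*} [CommRing R] [StarRing R] [Ring A] [StarRing A] [Algebra R A]
  [StarModule R A]

def LieSubalgebra.starSemilinearEquiv (L : LieSubalgebra R A) (hL : ∀ x ∈ L, star x ∈ L) :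
    L ≃ₛₗ[starRingEnd R] L where
  toFun y := ⟨star (y : A), hL _ y.2⟩
  invFun y := ⟨star (y : A), hL _ y.2⟩
  map_add' x y := by ext; simp
  map_smul' c y := by ext; simp [starRingEnd_apply]
  left_inv y := by ext; simp
  right_inv y := by ext; simp

theorem LieSubalgebra.starSemilinearEquiv_lie (L : LieSubalgebra R A)
    (hL : ∀ x ∈ L, star x ∈ L) (x y : L) :
    L.starSemilinearEquiv hL ⁅x, y⁆ =
      ⁅L.starSemilinearEquiv hL y, L.starSemilinearEquiv hL x⁆ := by
  ext
  simp [LieSubalgebra.starSemilinearEquiv, Ring.lie_def]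

end StarClosed

theorem LieAlgebra.killingForm_equiv_apply_left {R L : Type*} [CommRing R] [LieRing L]
    [LieAlgebra R L] (e : L ≃ₗ⁅R⁆ L) (x y : L) :
    killingForm R L (e x) y = killingForm R L x (e.symm y) := by
  simpa only [e.apply_symm_apply] using killingForm_of_equiv_apply e x (e.symm y)

theorem stmt_0_general {n : ℕ} (L : LieSubalgebra ℂ (Matrix (Fin n) (Fin n) ℂ))
    (hσ : ∀ x ∈ L, star x ∈ L) (φ : L ≃ₗ⁅ℂ⁆ L) :
    ∃ ψ : L ≃ₗ⁅ℂ⁆ L,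
      (∀ y : L, ψ y = sigmaStar L hσ (φ.symm (sigmaStar L hσ y))) ∧
      (∀ x y : L,
        killingForm ℂ L (φ x) (sigmaStar L hσ y) =
          killingForm ℂ L x (sigmaStar L hσ (ψ y))) := by
  set σ := L.starSemilinearEquiv hσ
  refine ⟨.conjSemilinearAnti σ (L.starSemilinearEquiv_lie hσ) φ.symm, fun y => rfl,
    fun x y => ?_⟩
  change killingForm ℂ L (φ x) (σ y) = killingForm ℂ L x (σ.symm (σ (φ.symm (σ y))))
  rw [σ.symm_apply_apply, LieAlgebra.killingForm_equiv_apply_left]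

/-- Let 𝔤 ⊆ Mₙ(ℂ) be a complex semisimple Lie algebra closed under conjugate
transpose x ↦ x* =: σ(x), with inner product ⟨x,y⟩ = B(x, y*) (B the Killing
form). For any Lie algebra automorphism φ of 𝔤, its adjoint with respect to
this inner product is σ ∘ φ⁻¹ ∘ σ, which is again a Lie algebra automorphism.
In particular Aut(𝔤) is closed under taking adjoints. -/
theorem stmt_0 {n : ℕ} (L : LieSubalgebra ℂ (Matrix (Fin n) (Fin n) ℂ))
    [FiniteDimensional ℂ L] [LieAlgebra.IsSemisimple ℂ L]
    (hσ : ∀ x ∈ L, star x ∈ L) (φ : L ≃ₗ⁅ℂ⁆ L) :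
    ∃ ψ : L ≃ₗ⁅ℂ⁆ L,
      (∀ y : L, ψ y = sigmaStar L hσ (φ.symm (sigmaStar L hσ y))) ∧
      (∀ x y : L,
        killingForm ℂ L (φ x) (sigmaStar L hσ y) =
          killingForm ℂ L x (sigmaStar L hσ (ψ y))) :=
  stmt_0_general L hσ φ
end

section
/- Let V be a finite-dimensional complex Hilbert space, H ⊆ GL(V) a Zariski-closed reductive subgroup invariant under adjoint, and K = H ∩ U(V). If x ∈ V is critical (⟨Xx,x⟩ = 0 for all X ∈ Lie(H)), then the set of points of the orbit Hx having the same norm as x is exactly the compact orbit Kx: {y ∈ Hx : ‖y‖ = ‖x‖} = Kx. -/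
/-!
Let `y = g x` with `g ∈ H` and `‖y‖ = ‖x‖`. The positive operator `g⋆g ∈ H` is `exp X` for a
self-adjoint `X` diagonal in an orthonormal eigenbasis `bᵢ` with real eigenvalues `cᵢ`. For any
polynomial `p` in the matrix entries, `t ↦ p (exp (t X))` is an exponential polynomial
`∑ aᵣ e^{r t}`; it vanishes on `ℕ` because `exp (n X) = (g⋆g)ⁿ ∈ H`, hence everywhere by the linear
independence of the characters `n ↦ (e^r)ⁿ`. So the whole one-parameter group `exp (t X)` lies in
the Zariski-closed group `H`, and criticality of `x` gives `∑ cᵢ wᵢ = 0` with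
`wᵢ = |⟪bᵢ, x⟫|²`, while `‖g x‖ = ‖x‖` gives `∑ e^{cᵢ} wᵢ = ∑ wᵢ`. Since `e^c - 1 - c > 0` for
`c ≠ 0`, every `wᵢ` with `cᵢ ≠ 0` vanishes, so `exp (t X)` fixes `x`, and
`k = g exp (-X/2) ∈ H` is unitary with `k x = y`.
-/

open scoped ComplexInnerProductSpace
open InnerProductSpace (rankOne)

noncomputable def expChar : Multiplicative ℝ →* (ℝ → ℂ) where
  toFun r t := Complex.exp (r.toAdd * t)
  map_one' := by ext; simp
  map_mul' r s := by ext t; simp [add_mul, Complex.exp_add]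

def expPolynomials : Subalgebra ℂ (ℝ → ℂ) := Algebra.adjoin ℂ (Set.range expChar)

lemma exp_mul_mem_expPolynomials (r : ℝ) :
    (fun t : ℝ => Complex.exp (r * t)) ∈ expPolynomials :=
  Algebra.subset_adjoin ⟨.ofAdd r, rfl⟩

lemma expPolynomials_toSubmodule :
    Subalgebra.toSubmodule expPolynomials = Submodule.span ℂ (Set.range expChar) := by
  rw [expPolynomials, Algebra.adjoin_eq_span, ← MonoidHom.coe_mrange, Submonoid.closure_eq]

lemma linearIndependent_expChar_comp_natCast :
    LinearIndependent ℂ fun r : Multiplicative ℝ => fun n : ℕ => expChar r n := by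
  have hinj : Function.Injective fun r : Multiplicative ℝ => powersHom ℂ (Complex.exp r.toAdd) :=
    fun r s h => by exact_mod_cast Real.exp_injective (by exact_mod_cast (powersHom ℂ).injective h)
  have hchar : (fun r : Multiplicative ℝ => fun n : ℕ => expChar r n) =
      (fun f : Multiplicative ℕ →* ℂ => (f : Multiplicative ℕ → ℂ)) ∘
        fun r : Multiplicative ℝ => powersHom ℂ (Complex.exp r.toAdd) := by
    funext r n
    change Complex.exp (r.toAdd * n) = Complex.exp r.toAdd ^ n
    rw [← Complex.exp_nat_mul, mul_comm]
  rw [hchar]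
  exact (linearIndependent_monoidHom (Multiplicative ℕ) ℂ).comp _ hinj

lemma eq_zero_of_mem_expPolynomials {f : ℝ → ℂ} (hf : f ∈ expPolynomials)
    (h : ∀ n : ℕ, f n = 0) : f = 0 := by
  rw [← Subalgebra.mem_toSubmodule, expPolynomials_toSubmodule,
    Finsupp.mem_span_range_iff_exists_finsupp] at hf
  obtain ⟨a, rfl⟩ := hf
  have ha : a = 0 := by
    refine linearIndependent_iff.mp linearIndependent_expChar_comp_natCast a ?_
    rw [Finsupp.linearCombination_apply]
    ext n
    simpa [Finsupp.sum, Finset.sum_apply] using h n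
  simp [ha]

section Zariski

variable {E : Type*} [AddCommGroup E] [Module ℂ E] {ι : Type*} [Fintype ι]

lemma comp_sum_exp_smul_mem_expPolynomials (c : ι → ℝ) (Q : ι → E) {p : E → ℂ}
    (hp : p ∈ Algebra.adjoin ℂ {f : E → ℂ | ∃ l : E →ₗ[ℂ] ℂ, ⇑l = f}) :
    (fun t : ℝ => p (∑ i, Complex.exp (c i * t) • Q i)) ∈ expPolynomials := by
  let φ : (E → ℂ) →ₐ[ℂ] (ℝ → ℂ) :=
    AlgHom.pi fun t => Pi.evalAlgHom ℂ (fun _ => ℂ) (∑ i, Complex.exp (c i * t) • Q i)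
  refine Algebra.adjoin_le (S := expPolynomials.comap φ) ?_ hp
  rintro _ ⟨l, rfl⟩
  have hφl : φ l = ∑ i, l (Q i) • fun t : ℝ => Complex.exp (c i * t) := by
    ext t
    simp [φ, mul_comm]
  rw [SetLike.mem_coe, Subalgebra.mem_comap, hφl]
  exact sum_mem fun i _ => Subalgebra.smul_mem _ (exp_mul_mem_expPolynomials (c i)) _

lemma eval_sum_exp_smul_eq_zero_of_forall_nat {P : Set (E → ℂ)}
    (hP : ∀ p ∈ P, p ∈ Algebra.adjoin ℂ {f : E → ℂ | ∃ l : E →ₗ[ℂ] ℂ, ⇑l = f})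
    (c : ι → ℝ) (Q : ι → E) (h : ∀ n : ℕ, ∀ p ∈ P, p (∑ i, Complex.exp (c i * n) • Q i) = 0)
    (t : ℝ) : ∀ p ∈ P, p (∑ i, Complex.exp (c i * t) • Q i) = 0 := fun p hp =>
  congrFun (eq_zero_of_mem_expPolynomials (comp_sum_exp_smul_mem_expPolynomials c Q (hP p hp))
    fun n => by exact_mod_cast h n p hp) t

end Zariski

lemma eq_zero_or_eq_zero_of_sum_exp_mul_eq {ι : Type*} [Fintype ι] {c w : ι → ℝ}
    (hw : ∀ i, 0 ≤ w i) (hlin : ∑ i, c i * w i = 0)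
    (hexp : ∑ i, Real.exp (c i) * w i = ∑ i, w i) (i : ι) : c i = 0 ∨ w i = 0 := by
  have hsum : ∑ i, (Real.exp (c i) - 1 - c i) * w i = 0 := by
    simp only [sub_mul, one_mul, Finset.sum_sub_distrib, hexp, hlin, sub_self]
  have hterm := (Fintype.sum_eq_zero_iff_of_nonneg fun j =>
    mul_nonneg (by linarith [Real.add_one_le_exp (c j)]) (hw j)).mp hsum
  refine or_iff_not_imp_left.mpr fun hc => ?_
  have hpos : 0 < Real.exp (c i) - 1 - c i := by linarith [Real.add_one_lt_exp hc]
  exact (mul_eq_zero.mp (congrFun hterm i)).resolve_left hpos.ne'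

namespace OrthonormalBasis

variable {ι V : Type*} [Fintype ι] [NormedAddCommGroup V] [InnerProductSpace ℂ V]
  (b : OrthonormalBasis ι ℂ V)

noncomputable def diagonal (c : ι → ℂ) : V →L[ℂ] V := ∑ i, c i • rankOne ℂ (b i) (b i)

lemma diagonal_apply (c : ι → ℂ) (v : V) : b.diagonal c v = ∑ i, (c i * ⟪b i, v⟫) • b i := by
  simp [diagonal, mul_smul]

lemma diagonal_apply_self (c : ι → ℂ) (j : ι) : b.diagonal c (b j) = c j • b j := by
  classical
  simp [diagonal_apply, b.inner_eq_ite]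

lemma ext_continuousLinearMap {S T : V →L[ℂ] V} (h : ∀ i, S (b i) = T (b i)) : S = T :=
  ContinuousLinearMap.coe_injective (b.toBasis.ext fun i => by simpa using h i)

lemma diagonal_mul (c d : ι → ℂ) : b.diagonal c * b.diagonal d = b.diagonal (c * d) :=
  b.ext_continuousLinearMap fun i => by simp [diagonal_apply_self, smul_smul, mul_comm]

lemma diagonal_one : b.diagonal 1 = 1 :=
  b.ext_continuousLinearMap fun i => by simp [diagonal_apply_self]

noncomputable def diagonalAlgHom : (ι → ℂ) →ₐ[ℂ] (V →L[ℂ] V) :=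
  AlgHom.ofLinearMap
    { toFun := b.diagonal
      map_add' c d := by simp [diagonal, add_smul, Finset.sum_add_distrib]
      map_smul' a c := by simp [diagonal, Finset.smul_sum, smul_smul] }
    b.diagonal_one fun c d => (b.diagonal_mul c d).symm

lemma diagonalAlgHom_apply (c : ι → ℂ) : b.diagonalAlgHom c = b.diagonal c := rfl

lemma diagonal_apply_eq_self {c : ι → ℂ} {x : V} (h : ∀ i, c i = 1 ∨ ⟪b i, x⟫ = 0) :
    b.diagonal c x = x := by
  conv_rhs => rw [← b.sum_repr' x]
  rw [diagonal_apply]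
  refine Finset.sum_congr rfl fun i _ => ?_
  rcases h i with h | h <;> simp [h]

lemma inner_diagonal_ofReal_apply_self (r : ι → ℝ) (x : V) :
    ⟪b.diagonal (fun i => r i) x, x⟫ = ((∑ i, r i * ‖⟪b i, x⟫‖ ^ 2 : ℝ) : ℂ) := by
  simp only [diagonal_apply, sum_inner, inner_smul_left, Complex.ofReal_sum]
  refine Finset.sum_congr rfl fun i _ => ?_
  rw [map_mul, Complex.conj_ofReal, mul_assoc, Complex.conj_mul']
  push_cast
  ring

lemma diagonal_exp_mul_apply_eq_self_of_inner_eq_zero (c : ι → ℝ) {x : V}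
    (hcrit : ⟪b.diagonal (fun i => c i) x, x⟫ = 0)
    (hnorm : ⟪b.diagonal (fun i => Complex.exp (c i)) x, x⟫ = ⟪x, x⟫) (t : ℝ) :
    b.diagonal (fun i => Complex.exp (c i * t)) x = x := by
  rw [inner_diagonal_ofReal_apply_self, Complex.ofReal_eq_zero] at hcrit
  simp only [← Complex.ofReal_exp, inner_diagonal_ofReal_apply_self, inner_self_eq_norm_sq_to_K,
    ← RCLike.ofReal_pow, ← b.sum_sq_norm_inner_right x] at hnorm
  refine b.diagonal_apply_eq_self fun i => ?_
  rcases eq_zero_or_eq_zero_of_sum_exp_mul_eq (fun i => by positivity) hcrit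
    (Complex.ofReal_injective hnorm) i with h | h
  · simp [h]
  · exact Or.inr (by simpa using h)

variable [FiniteDimensional ℂ V]

lemma adjoint_diagonal (c : ι → ℂ) :
    ContinuousLinearMap.adjoint (b.diagonal c) = b.diagonal (star c) := by
  simp [diagonal, map_smulₛₗ]

lemma exp_diagonal (c : ι → ℂ) :
    NormedSpace.exp (b.diagonal c) = b.diagonal fun i => Complex.exp (c i) := by
  have hcont : Continuous b.diagonalAlgHom :=
    b.diagonalAlgHom.toLinearMap.continuous_of_finiteDimensional
  rw [← diagonalAlgHom_apply, ← NormedSpace.map_exp_of_mem_ball (𝕂 := ℂ) _ hcont, Pi.exp_def,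
    Complex.exp_eq_exp_ℂ]
  · rfl
  · simp [NormedSpace.expSeries_radius_eq_top]

lemma exp_smul_diagonal (a : ℂ) (c : ι → ℂ) :
    NormedSpace.exp (a • b.diagonal c) = b.diagonal fun i => Complex.exp (c i * a) := by
  rw [← b.diagonalAlgHom_apply, ← map_smul, b.diagonalAlgHom_apply, b.exp_diagonal]
  simp [mul_comm]

lemma adjoint_mul_diagonal_exp_neg_half_mul_self_eq_one (c : ι → ℝ) {g : V →L[ℂ] V}
    (hg : ContinuousLinearMap.adjoint g * g = b.diagonal fun i => Complex.exp (c i)) :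
    ContinuousLinearMap.adjoint (g * b.diagonal fun i => Complex.exp (c i * (-1 / 2 : ℝ))) *
      (g * b.diagonal fun i => Complex.exp (c i * (-1 / 2 : ℝ))) = 1 := by
  have hself : star (fun i => Complex.exp (c i * (-1 / 2 : ℝ))) =
      fun i => Complex.exp (c i * (-1 / 2 : ℝ)) := by
    funext i
    rw [Pi.star_apply, Complex.star_def, ← Complex.exp_conj, map_mul, Complex.conj_ofReal,
      Complex.conj_ofReal]
  rw [← ContinuousLinearMap.star_eq_adjoint, star_mul, ContinuousLinearMap.star_eq_adjoint,
    ContinuousLinearMap.star_eq_adjoint, b.adjoint_diagonal, hself, mul_assoc,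
    ← mul_assoc (ContinuousLinearMap.adjoint g), hg, b.diagonal_mul, b.diagonal_mul,
    ← b.diagonal_one]
  congr 1
  funext i
  simp only [Pi.mul_apply, Pi.one_apply, ← Complex.exp_add]
  rw [← Complex.exp_zero]
  push_cast
  ring_nf

end OrthonormalBasis

section Operators

variable {V : Type*} [NormedAddCommGroup V] [InnerProductSpace ℂ V]

lemma exists_adjoint_mul_self_eq_diagonal_exp [FiniteDimensional ℂ V] {g : V →L[ℂ] V}
    (hg : IsUnit g) :
    ∃ (b : OrthonormalBasis (Fin (Module.finrank ℂ V)) ℂ V) (c : Fin (Module.finrank ℂ V) → ℝ),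
      ContinuousLinearMap.adjoint g * g = b.diagonal fun i => Complex.exp (c i) := by
  have hT := g.isPositive_adjoint_comp_self
  set b := hT.isSymmetric.eigenvectorBasis rfl
  set μ := hT.isSymmetric.eigenvalues rfl
  have hμ : ∀ i, 0 < μ i := by
    intro i
    refine (hT.toLinearMap.nonneg_eigenvalues rfl i).lt_of_ne' fun h0 => b.orthonormal.ne_zero i ?_
    have hTb := hT.isSymmetric.apply_eigenvectorBasis rfl i
    change (ContinuousLinearMap.adjoint g * g) (b i) = (μ i : ℂ) • b i at hTb
    rw [show μ i = 0 from h0, Complex.ofReal_zero, zero_smul] at hTb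
    exact ContinuousLinearMap.isUnit_iff_bijective.mp (hg.star.mul hg) |>.injective
      (by rwa [map_zero, ContinuousLinearMap.star_eq_adjoint])
  refine ⟨b, fun i => Real.log (μ i), b.ext_continuousLinearMap fun i => ?_⟩
  rw [b.diagonal_apply_self, ← Complex.ofReal_exp, Real.exp_log (hμ i)]
  exact hT.isSymmetric.apply_eigenvectorBasis rfl i

lemma exists_mem_diagonal_exp_mul {ι : Type*} [Fintype ι] {H : Subgroup (V →L[ℂ] V)ˣ}
    {P : Set ((V →L[ℂ] V) → ℂ)}
    (hP : ∀ p ∈ P, p ∈ Algebra.adjoin ℂ {f | ∃ l : (V →L[ℂ] V) →ₗ[ℂ] ℂ, ⇑l = f})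
    (hH : {a : V →L[ℂ] V | ∃ u ∈ H, (u : V →L[ℂ] V) = a} =
      {a : V →L[ℂ] V | IsUnit a ∧ ∀ p ∈ P, p a = 0})
    (b : OrthonormalBasis ι ℂ V) (c : ι → ℝ)
    (hc : ∃ u ∈ H, (u : V →L[ℂ] V) = b.diagonal fun i => Complex.exp (c i)) (t : ℝ) :
    ∃ u ∈ H, (u : V →L[ℂ] V) = b.diagonal fun i => Complex.exp (c i * t) := by
  have hnat (n : ℕ) : ∀ p ∈ P, p (b.diagonal fun i => Complex.exp (c i * n)) = 0 := by
    obtain ⟨u, hu, hu_eq⟩ := hc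
    have hmem : (b.diagonal fun i => Complex.exp (c i * n)) ∈
        {a : V →L[ℂ] V | ∃ u ∈ H, (u : V →L[ℂ] V) = a} := by
      refine ⟨u ^ n, H.pow_mem hu n, ?_⟩
      rw [Units.val_pow_eq_pow_val, hu_eq, ← b.diagonalAlgHom_apply, ← map_pow,
        b.diagonalAlgHom_apply]
      congr 1
      funext i
      simp [← Complex.exp_nat_mul, mul_comm]
    exact (hH ▸ hmem).2
  have hunit : IsUnit (b.diagonal fun i => Complex.exp (c i * t)) :=
    (Pi.isUnit_iff.mpr fun i => (Complex.exp_ne_zero _).isUnit).map b.diagonalAlgHom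
  have hmem : (b.diagonal fun i => Complex.exp (c i * t)) ∈
      {a : V →L[ℂ] V | IsUnit a ∧ ∀ p ∈ P, p a = 0} :=
    ⟨hunit, eval_sum_exp_smul_eq_zero_of_forall_nat hP c _ hnat t⟩
  rwa [← hH] at hmem

end Operators

open scoped ComplexInnerProductSpace in
/-- Kempf–Ness, part 2: let V be a finite-dimensional complex Hilbert space,
H ⊆ GL(V) a Zariski-closed (reductive) subgroup invariant under adjoint, and
K = H ∩ U(V) the subgroup of unitary elements of H. If x ∈ V is critical
(⟪X x, x⟫ = 0 for all X ∈ Lie(H)), then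
{y ∈ Hx : ‖y‖ = ‖x‖} = Kx. -/
theorem stmt_6 {V : Type*} [NormedAddCommGroup V] [InnerProductSpace ℂ V]
    [FiniteDimensional ℂ V]
    (H : Subgroup ((V →L[ℂ] V)ˣ))
    (hZar : ∃ P : Set ((V →L[ℂ] V) → ℂ),
      (∀ p ∈ P, p ∈ Algebra.adjoin ℂ
        {f : (V →L[ℂ] V) → ℂ | ∃ l : (V →L[ℂ] V) →ₗ[ℂ] ℂ, ⇑l = f}) ∧
      {a : V →L[ℂ] V | ∃ u ∈ H, (u : V →L[ℂ] V) = a} =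
        {a : V →L[ℂ] V | IsUnit a ∧ ∀ p ∈ P, p a = 0})
    (hstar : ∀ u ∈ H, ∃ v ∈ H,
      (v : V →L[ℂ] V) = ContinuousLinearMap.adjoint (u : V →L[ℂ] V))
    (x : V)
    (hcrit : ∀ X : V →L[ℂ] V,
      (∀ t : ℝ, ∃ u ∈ H, (u : V →L[ℂ] V) = NormedSpace.exp ((t : ℂ) • X)) →
      ⟪X x, x⟫ = 0) :
    {y : V | (∃ h ∈ H, (h : V →L[ℂ] V) x = y) ∧ ‖y‖ = ‖x‖} =
      {y : V | ∃ k ∈ H,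
        ContinuousLinearMap.adjoint (k : V →L[ℂ] V) * (k : V →L[ℂ] V) = 1 ∧
        (k : V →L[ℂ] V) x = y} := by
  obtain ⟨P, hP, hH⟩ := hZar
  ext y
  refine ⟨?_, fun ⟨k, hk, hkk, hky⟩ =>
    ⟨⟨k, hk, hky⟩, hky ▸ (ContinuousLinearMap.norm_map_iff_adjoint_comp_self _).mpr hkk x⟩⟩
  rintro ⟨⟨g, hg, rfl⟩, hnorm⟩
  obtain ⟨v, hv, hv_eq⟩ := hstar g hg
  obtain ⟨b, c, hT⟩ := exists_adjoint_mul_self_eq_diagonal_exp g.isUnit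
  have hF := exists_mem_diagonal_exp_mul hP hH b c
    ⟨v * g, H.mul_mem hv hg, by rw [Units.val_mul, hv_eq, hT]⟩
  have hfix := b.diagonal_exp_mul_apply_eq_self_of_inner_eq_zero c
    (hcrit _ fun t => b.exp_smul_diagonal t _ ▸ hF t)
    (by rw [← hT, mul_apply_eq_comp, ContinuousLinearMap.adjoint_inner_left,
      inner_self_eq_norm_sq_to_K, inner_self_eq_norm_sq_to_K, hnorm])
  obtain ⟨u, hu, hu_eq⟩ := hF (-1 / 2)
  refine ⟨g * u, H.mul_mem hg hu, ?_, ?_⟩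
  · rw [Units.val_mul, hu_eq]
    exact b.adjoint_mul_diagonal_exp_neg_half_mul_self_eq_one c hT
  · rw [Units.val_mul, mul_apply_eq_comp, hu_eq, hfix]
end

section
/- In ℂ³ ⊗ ℂ³ ⊗ ℂ³ define the bracket [x₁⊗x₂⊗x₃, y₁⊗y₂⊗y₃] = (x₁∧y₁) ⊗ (x₂∧y₂) ⊗ (x₃∧y₃) with values in Λ²ℂ³ ⊗ Λ²ℂ³ ⊗ Λ²ℂ³. Let v₁ = e₁⊗e₁⊗e₁ + e₂⊗e₂⊗e₂ + e₃⊗e₃⊗e₃, v₂ = e₁⊗e₂⊗e₃ + e₃⊗e₁⊗e₂ + e₂⊗e₃⊗e₁, v₃ = e₃⊗e₂⊗e₁ + e₁⊗e₃⊗e₂ + e₂⊗e₁⊗e₃. Then [v_i, v_j] = 0 for all i, j ∈ {1,2,3}. -/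
noncomputable section
open TensorProduct

abbrev V₃ : Type := Fin 3 → ℂ

abbrev T₃ : Type := V₃ ⊗[ℂ] (V₃ ⊗[ℂ] V₃)

/-- standard basis of ℂ³ -/
def e₃ (i : Fin 3) : V₃ := Pi.single i 1

/-- pure tensor x ⊗ y ⊗ z -/
def pt (x y z : V₃) : T₃ := x ⊗ₜ[ℂ] (y ⊗ₜ[ℂ] z)

/-- the wedge x ∧ y, viewed in the exterior algebra of ℂ³ -/
def wdg (x y : V₃) : ExteriorAlgebra ℂ V₃ :=
  ExteriorAlgebra.ι ℂ x * ExteriorAlgebra.ι ℂ y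

def v₁ : T₃ := pt (e₃ 0) (e₃ 0) (e₃ 0) + pt (e₃ 1) (e₃ 1) (e₃ 1) + pt (e₃ 2) (e₃ 2) (e₃ 2)
def v₂ : T₃ := pt (e₃ 0) (e₃ 1) (e₃ 2) + pt (e₃ 2) (e₃ 0) (e₃ 1) + pt (e₃ 1) (e₃ 2) (e₃ 0)
def v₃ : T₃ := pt (e₃ 2) (e₃ 1) (e₃ 0) + pt (e₃ 0) (e₃ 2) (e₃ 1) + pt (e₃ 1) (e₃ 0) (e₃ 2)

/-!
The bracket changes sign when its arguments are exchanged, since each of its three wedge factors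
does; by bilinearity it is then antisymmetric on all of ℂ³⊗ℂ³⊗ℂ³, so `[vᵢ, vᵢ] = 0`.
For `i ≠ j` every pure tensor of `vᵢ` agrees with every pure tensor of `vⱼ` in some tensor slot,
so each of the nine terms of `[vᵢ, vⱼ]` contains a factor `x ∧ x = 0`.
-/

lemma wdg_self (x : V₃) : wdg x x = 0 :=
  ExteriorAlgebra.ι_sq_zero x

lemma wdg_swap (x y : V₃) : wdg y x = -wdg x y := by
  have h := ExteriorAlgebra.ι_sq_zero (R := ℂ) (x + y)
  simp only [map_add, add_mul, mul_add, ExteriorAlgebra.ι_sq_zero, zero_add, add_zero] at h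
  exact eq_neg_of_add_eq_zero_left h

section Bracket

variable (B : T₃ →ₗ[ℂ] T₃ →ₗ[ℂ]
      (ExteriorAlgebra ℂ V₃ ⊗[ℂ] (ExteriorAlgebra ℂ V₃ ⊗[ℂ] ExteriorAlgebra ℂ V₃)))
    (hB : ∀ x₁ x₂ x₃ y₁ y₂ y₃ : V₃,
      B (pt x₁ x₂ x₃) (pt y₁ y₂ y₃) =
        wdg x₁ y₁ ⊗ₜ[ℂ] (wdg x₂ y₂ ⊗ₜ[ℂ] wdg x₃ y₃))
include hB

lemma bracket_flip_eq_neg_one_smul : B.flip = (-1 : ℂ) • B := by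
  refine TensorProduct.ext_threefold' fun x₁ x₂ x₃ ↦
    TensorProduct.ext_threefold' fun y₁ y₂ y₃ ↦ ?_
  change B (pt y₁ y₂ y₃) (pt x₁ x₂ x₃) = (-1 : ℂ) • B (pt x₁ x₂ x₃) (pt y₁ y₂ y₃)
  rw [hB, hB, wdg_swap x₁, wdg_swap x₂, wdg_swap x₃]
  simp only [neg_tmul, tmul_neg, neg_neg]
  exact (neg_one_smul ℂ _).symm

lemma bracket_swap (a b : T₃) : B b a = -B a b := by
  rw [← B.flip_apply, bracket_flip_eq_neg_one_smul B hB, LinearMap.smul_apply,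
    LinearMap.smul_apply, neg_one_smul]

lemma bracket_self (a : T₃) : B a a = 0 := by
  have h : (2 : ℂ) • B a a = 0 := by
    rw [two_smul]
    nth_rewrite 2 [bracket_swap B hB]
    exact add_neg_cancel _
  simpa using h

lemma bracket_v₁_v₂ : B v₁ v₂ = 0 := by
  simp only [v₁, v₂, map_add, LinearMap.add_apply, hB, wdg_self, zero_tmul, tmul_zero, add_zero]

lemma bracket_v₁_v₃ : B v₁ v₃ = 0 := by
  simp only [v₁, v₃, map_add, LinearMap.add_apply, hB, wdg_self, zero_tmul, tmul_zero, add_zero]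

lemma bracket_v₂_v₃ : B v₂ v₃ = 0 := by
  simp only [v₂, v₃, map_add, LinearMap.add_apply, hB, wdg_self, zero_tmul, tmul_zero, add_zero]

end Bracket

/-- For the bilinear bracket `[x₁⊗x₂⊗x₃, y₁⊗y₂⊗y₃] = (x₁∧y₁)⊗(x₂∧y₂)⊗(x₃∧y₃)`
on ℂ³⊗ℂ³⊗ℂ³, the elements v₁, v₂, v₃ pairwise commute: `[vᵢ, vⱼ] = 0`. -/
theorem stmt_8
    (B : T₃ →ₗ[ℂ] T₃ →ₗ[ℂ]
      (ExteriorAlgebra ℂ V₃ ⊗[ℂ] (ExteriorAlgebra ℂ V₃ ⊗[ℂ] ExteriorAlgebra ℂ V₃)))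
    (hB : ∀ x₁ x₂ x₃ y₁ y₂ y₃ : V₃,
      B (pt x₁ x₂ x₃) (pt y₁ y₂ y₃) =
        wdg x₁ y₁ ⊗ₜ[ℂ] (wdg x₂ y₂ ⊗ₜ[ℂ] wdg x₃ y₃)) :
    ∀ i j : Fin 3, B (![v₁, v₂, v₃] i) (![v₁, v₂, v₃] j) = 0 := by
  intro i j
  fin_cases i <;> fin_cases j <;>
    simp only [Fin.zero_eta, Fin.mk_one, Fin.reduceFinMk, Matrix.cons_val, bracket_self B hB,
      bracket_swap B hB v₁ v₂, bracket_swap B hB v₁ v₃, bracket_swap B hB v₂ v₃,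
      bracket_v₁_v₂ B hB, bracket_v₁_v₃ B hB, bracket_v₂_v₃ B hB, neg_zero]
end
end

section
/- For SL(3,ℂ), let χ_{m,n} denote the character of the irreducible representation F^{m,n} with highest weight mε₁ + nε₂ (m ≥ n ≥ 0), and let u = diag(ζ², ζ, 1) with ζ = e^{2πi/3}. If m + n ≡ 0 (mod 3), then χ_{m,n}(u) ∈ {1, −1, 0} and dim F^{m,n} ≡ χ_{m,n}(u) (mod 3), where dim F^{m,n} = (m−n+1)(n+1)(m+2)/2; that is, dim F^{m,n} mod 3 equals 0 if χ_{m,n}(u) = 0 and equals ±1 matching χ_{m,n}(u) otherwise. Here χ_{m,n}(u) = (sum over s in the Weyl group S₃ of sgn(s)ζ^{2·(s(Λ+ρ))(H_ρ)}) / (sum over s in S₃ of sgn(s)ζ^{2·(sρ)(H_ρ)}) by the Weyl character formula, with H_ρ = diag(1,0,−1). -/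
lemma sum_perm3 (ζ : ℂ) (hζ0 : ζ ≠ 0) (a b c : ℤ) :
    (∑ s : Equiv.Perm (Fin 3), ((Equiv.Perm.sign s : ℤ) : ℂ) *
        ζ ^ (2 * ((![a, b, c] (s 0)) - (![a, b, c] (s 2))))) =
    ζ^(2*(a-c)) + ζ^(2*(b-a)) + ζ^(2*(c-b)) - ζ^(2*(a-b)) - ζ^(2*(b-c)) - ζ^(2*(c-a)) := by
  have key : (∑ s : Equiv.Perm (Fin 3), ((Equiv.Perm.sign s : ℤ) : ℂ) *
        ζ ^ (2 * ((![a, b, c] (s 0)) - (![a, b, c] (s 2))))) =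
      (Matrix.of fun v i : Fin 3 => ![ζ ^ (2 * (![a,b,c] v)), 1, ζ ^ (-(2 * (![a,b,c] v)))] i).det := by
    rw [Matrix.det_apply]
    refine Finset.sum_congr rfl fun σ _ => ?_
    rw [Fin.prod_univ_three]
    simp only [Matrix.of_apply, Matrix.cons_val_zero, Matrix.cons_val_one, Matrix.head_cons,
      Matrix.cons_val_two, Matrix.tail_cons]
    rw [mul_one, ← zpow_add₀ hζ0]
    rw [Units.smul_def, zsmul_eq_mul]
    ring_nf
  rw [key, Matrix.det_fin_three]
  simp only [Matrix.of_apply, Matrix.cons_val_zero, Matrix.cons_val_one, Matrix.head_cons,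
    Matrix.cons_val_two, Matrix.tail_cons]
  simp only [mul_one, one_mul, ← zpow_add₀ hζ0]
  ring_nf

lemma zred (ζ : ℂ) (hζ0 : ζ ≠ 0) (hz3 : ζ ^ (3 : ℕ) = 1) (k r : ℤ) (h : (3:ℤ) ∣ k - r) :
    ζ ^ k = ζ ^ r := by
  obtain ⟨t, ht⟩ := h
  have hk : k = 3 * t + r := by omega
  rw [hk, zpow_add₀ hζ0, zpow_mul, show (3:ℤ) = ((3:ℕ):ℤ) from rfl, zpow_natCast, hz3,
    one_zpow, one_mul]

/-- For SL(3,ℂ), let χ_{m,n}(u) be the value of the character of the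
irreducible representation F^{m,n} (highest weight mε₁ + nε₂, m ≥ n ≥ 0) at
u = diag(ζ²,ζ,1), ζ = e^{2πi/3}, computed by the Weyl character formula with
H_ρ = diag(1,0,-1): weights Λ+ρ = (m+1, n, -1) and ρ = (1,0,-1) permuted by
the Weyl group S₃. If m + n ≡ 0 (mod 3) then χ_{m,n}(u) is an integer in
{0, 1, -1} and dim F^{m,n} = (m-n+1)(n+1)(m+2)/2 ≡ χ_{m,n}(u) (mod 3). -/
theorem stmt_17 (m n : ℕ) (hmn : n ≤ m) (h3 : (m + n) % 3 = 0)
    (d : ℤ) (hd : 2 * d = ((m : ℤ) - n + 1) * ((n : ℤ) + 1) * ((m : ℤ) + 2))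
    (ζ : ℂ) (hζ : ζ = Complex.exp (2 * Real.pi * Complex.I / 3))
    (χ : ℂ)
    (hχ : χ =
      (∑ s : Equiv.Perm (Fin 3), ((Equiv.Perm.sign s : ℤ) : ℂ) *
          ζ ^ (2 * ((![(m : ℤ) + 1, (n : ℤ), -1] (s 0)) - (![(m : ℤ) + 1, (n : ℤ), -1] (s 2))))) /
      (∑ s : Equiv.Perm (Fin 3), ((Equiv.Perm.sign s : ℤ) : ℂ) *
          ζ ^ (2 * ((![(1 : ℤ), 0, -1] (s 0)) - (![(1 : ℤ), 0, -1] (s 2)))))) :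
    ∃ c : ℤ, (c = 0 ∨ c = 1 ∨ c = -1) ∧ χ = (c : ℂ) ∧ (3 : ℤ) ∣ (d - c) := by
  have hζ0 : ζ ≠ 0 := by rw [hζ]; exact Complex.exp_ne_zero _
  have hz3 : ζ ^ (3 : ℕ) = 1 := by
    rw [hζ, ← Complex.exp_nat_mul]
    have : ((3:ℕ) : ℂ) * (2 * Real.pi * Complex.I / 3) = 2 * Real.pi * Complex.I := by
      push_cast; ring
    rw [this, Complex.exp_two_pi_mul_I]
  have hζ1 : ζ ≠ 1 := by
    rw [hζ]
    intro h
    rw [Complex.exp_eq_one_iff] at h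
    obtain ⟨k, hk⟩ := h
    have h2 : (2 * (Real.pi : ℂ) * Complex.I) ≠ 0 := by
      simp [Real.pi_ne_zero, Complex.I_ne_zero]
    have h3' : (2 * (Real.pi : ℂ) * Complex.I) * 1 = (2 * (Real.pi : ℂ) * Complex.I) * (3 * k) := by
      linear_combination 3 * hk
    have hk1 : (1 : ℂ) = 3 * k := mul_left_cancel₀ h2 h3'
    have : ((3 * k : ℤ) : ℂ) = 1 := by push_cast; linear_combination -hk1
    have : (3 * k : ℤ) = 1 := by exact_mod_cast this
    omega
  have R := zred ζ hζ0 hz3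
  rw [sum_perm3 ζ hζ0, sum_perm3 ζ hζ0] at hχ
  have hden0 : ζ + ζ + ζ - ζ ^ 2 - ζ ^ 2 - ζ ^ 2 ≠ 0 := by
    have he : ζ + ζ + ζ - ζ ^ 2 - ζ ^ 2 - ζ ^ 2 = 3 * ζ * (1 - ζ) := by ring
    rw [he]
    refine mul_ne_zero (mul_ne_zero (by norm_num) hζ0) ?_
    intro h
    exact hζ1 (by linear_combination -h)
  have e1 : ζ ^ (1:ℤ) = ζ := zpow_one ζ
  have e2 : ζ ^ (2:ℤ) = ζ ^ 2 := by
    rw [show (2:ℤ) = ((2:ℕ):ℤ) from rfl, zpow_natCast]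
  -- reduce the denominator
  rw [R (2*((1:ℤ) - -1)) 1 (by decide), R (2*((0:ℤ) - 1)) 1 (by decide),
    R (2*((-1:ℤ) - 0)) 1 (by decide), R (2*((1:ℤ) - 0)) 2 (by decide),
    R (2*((0:ℤ) - -1)) 2 (by decide), R (2*((-1:ℤ) - 1)) 2 (by decide), e1, e2] at hχ
  have hcase : (m % 3 = 0 ∧ n % 3 = 0) ∨ (m % 3 = 1 ∧ n % 3 = 2) ∨ (m % 3 = 2 ∧ n % 3 = 1) := by
    omega
  rcases hcase with ⟨hm, hn⟩ | ⟨hm, hn⟩ | ⟨hm, hn⟩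
  · -- m ≡ 0, n ≡ 0 : χ = 1
    refine ⟨1, Or.inr (Or.inl rfl), ?_, ?_⟩
    · rw [R (2*((m:ℤ) + 1 - -1)) 1 (by omega), R (2*((n:ℤ) - ((m:ℤ) + 1))) 1 (by omega),
        R (2*((-1:ℤ) - (n:ℤ))) 1 (by omega), R (2*((m:ℤ) + 1 - (n:ℤ))) 2 (by omega),
        R (2*((n:ℤ) - -1)) 2 (by omega), R (2*((-1:ℤ) - ((m:ℤ) + 1))) 2 (by omega),
        e1, e2] at hχ
      rw [hχ, div_self hden0]
      norm_num
    · have h1 : ((m:ℤ) - n + 1) % 3 = 1 := by omega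
      have h2 : ((n:ℤ) + 1) % 3 = 1 := by omega
      have h3' : ((m:ℤ) + 2) % 3 = 2 := by omega
      have key : (2 * d) % 3 = 2 := by
        rw [hd, Int.mul_emod, Int.mul_emod ((m:ℤ) - n + 1), h1, h2, h3']
        decide
      omega
  · -- m ≡ 1, n ≡ 2 : χ = 0
    refine ⟨0, Or.inl rfl, ?_, ?_⟩
    · rw [R (2*((m:ℤ) + 1 - -1)) 0 (by omega), R (2*((n:ℤ) - ((m:ℤ) + 1))) 0 (by omega),
        R (2*((-1:ℤ) - (n:ℤ))) 0 (by omega), R (2*((m:ℤ) + 1 - (n:ℤ))) 0 (by omega),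
        R (2*((n:ℤ) - -1)) 0 (by omega), R (2*((-1:ℤ) - ((m:ℤ) + 1))) 0 (by omega),
        zpow_zero] at hχ
      rw [hχ]
      norm_num
    · have h1 : ((m:ℤ) - n + 1) % 3 = 0 := by omega
      have key : (2 * d) % 3 = 0 := by
        rw [hd, Int.mul_emod, Int.mul_emod ((m:ℤ) - n + 1), h1]
        norm_num
      omega
  · -- m ≡ 2, n ≡ 1 : χ = -1
    refine ⟨-1, Or.inr (Or.inr rfl), ?_, ?_⟩
    · rw [R (2*((m:ℤ) + 1 - -1)) 2 (by omega), R (2*((n:ℤ) - ((m:ℤ) + 1))) 2 (by omega),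
        R (2*((-1:ℤ) - (n:ℤ))) 2 (by omega), R (2*((m:ℤ) + 1 - (n:ℤ))) 1 (by omega),
        R (2*((n:ℤ) - -1)) 1 (by omega), R (2*((-1:ℤ) - ((m:ℤ) + 1))) 1 (by omega),
        e1, e2] at hχ
      rw [hχ, div_eq_iff hden0]
      push_cast
      ring
    · have h1 : ((m:ℤ) - n + 1) % 3 = 2 := by omega
      have h2 : ((n:ℤ) + 1) % 3 = 2 := by omega
      have h3' : ((m:ℤ) + 2) % 3 = 1 := by omega
      have key : (2 * d) % 3 = 1 := by
        rw [hd, Int.mul_emod, Int.mul_emod ((m:ℤ) - n + 1), h1, h2, h3']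
        decide
      omega
end
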